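/- arXiv:2104.01385 — 2 statements merged into one kernel-verified Lean document; each statement's English description precedes it below -/
import Mathlib

section
/- If f is ρ-Lipschitz in the sense that ‖f(x,u) − f(y,v)‖∞ ≤ ρ(‖x−y‖∞ + ‖u−v‖∞) for all x,y ∈ 𝒳 and u,v ∈ 𝒰, and the approximate predecessor P̂(Y) is any set satisfying Pre(Y ⊖ B_{ρ(ε+μ)}) ⊆ P̂(Y) ⊆ Pre(Y) for all compact Y, then the componentwise operator T̂(M,W)[i] = ⋃_j (P̂(W[j]) ∩ L⁻¹(m_{ij})) satisfies T^{ρ(ε+μ)}(M,W)[i] ⊆ T̂(M,W)[i] ⊆ T⁰(M,W)[i] for all i. -/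
/-! A point that is steered into `Y` robustly against every disturbance of size `≤ δ` is
steered exactly into `Y ⊖ B_δ`, so `Pre^δ(Y) ⊆ Pre(Y ⊖ B_δ) ⊆ P̂(Y) ⊆ Pre(Y)`; both operators
`T` and `T̂` are the same union of intersections built from a predecessor map, and that union
is monotone in the map. -/

open Set

/-- `Pre 𝒳 𝒰 f δ X` is the δ-perturbed predecessor of `X`. -/
def Pre {n m : ℕ} (𝒳 : Set (Fin n → ℝ)) (𝒰 : Set (Fin m → ℝ))
    (f : (Fin n → ℝ) → (Fin m → ℝ) → Fin n → ℝ) (δ : ℝ)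
    (X : Set (Fin n → ℝ)) : Set (Fin n → ℝ) :=
  {x | x ∈ 𝒳 ∧ ∃ u ∈ 𝒰, ∀ d : Fin n → ℝ, ‖d‖ ≤ δ → f x u + d ∈ X}

/-- Pontryagin difference `A ⊖ B = {c | ∀ b ∈ B, c + b ∈ A}`. -/
def pdiff {n : ℕ} (A B : Set (Fin n → ℝ)) : Set (Fin n → ℝ) :=
  {c | ∀ b ∈ B, c + b ∈ A}

/-- Closed ∞-norm ball of radius `r` centered at the origin. -/
def ballInf {n : ℕ} (r : ℝ) : Set (Fin n → ℝ) := {d | ‖d‖ ≤ r}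

/-- The exact operator `T^δ`, with `M i j = L⁻¹(m_{ij})`. -/
def TOp {n m n₁ n₂ : ℕ} (𝒳 : Set (Fin n → ℝ)) (𝒰 : Set (Fin m → ℝ))
    (f : (Fin n → ℝ) → (Fin m → ℝ) → Fin n → ℝ) (δ : ℝ)
    (M : Fin n₁ → Fin n₂ → Set (Fin n → ℝ)) (W : Fin n₂ → Set (Fin n → ℝ)) :
    Fin n₁ → Set (Fin n → ℝ) :=
  fun i => ⋃ j, Pre 𝒳 𝒰 f δ (W j) ∩ M i j

/-- The operator built from an approximate predecessor `P̂`. -/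
def TOpApprox {n n₁ n₂ : ℕ} (Phat : Set (Fin n → ℝ) → Set (Fin n → ℝ))
    (M : Fin n₁ → Fin n₂ → Set (Fin n → ℝ)) (W : Fin n₂ → Set (Fin n → ℝ)) :
    Fin n₁ → Set (Fin n → ℝ) :=
  fun i => ⋃ j, Phat (W j) ∩ M i j

theorem Pre_subset_Pre_zero_pdiff {n m : ℕ} (𝒳 : Set (Fin n → ℝ)) (𝒰 : Set (Fin m → ℝ))
    (f : (Fin n → ℝ) → (Fin m → ℝ) → Fin n → ℝ) (δ : ℝ) (X : Set (Fin n → ℝ)) :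
    Pre 𝒳 𝒰 f δ X ⊆ Pre 𝒳 𝒰 f 0 (pdiff X (ballInf δ)) := by
  rintro x ⟨hx, u, hu, hrobust⟩
  refine ⟨hx, u, hu, fun d hd b hb => ?_⟩
  rw [norm_le_zero_iff.mp hd, add_zero]
  exact hrobust b hb

theorem TOp_eq_TOpApprox_Pre {n m n₁ n₂ : ℕ} (𝒳 : Set (Fin n → ℝ)) (𝒰 : Set (Fin m → ℝ))
    (f : (Fin n → ℝ) → (Fin m → ℝ) → Fin n → ℝ) (δ : ℝ)
    (M : Fin n₁ → Fin n₂ → Set (Fin n → ℝ)) (W : Fin n₂ → Set (Fin n → ℝ)) :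
    TOp 𝒳 𝒰 f δ M W = TOpApprox (Pre 𝒳 𝒰 f δ) M W :=
  rfl

theorem TOpApprox_mono {n n₁ n₂ : ℕ} {P Q : Set (Fin n → ℝ) → Set (Fin n → ℝ)}
    (M : Fin n₁ → Fin n₂ → Set (Fin n → ℝ)) (W : Fin n₂ → Set (Fin n → ℝ))
    (hPQ : ∀ j, P (W j) ⊆ Q (W j)) (i : Fin n₁) :
    TOpApprox P M W i ⊆ TOpApprox Q M W i :=
  iUnion_mono fun j => inter_subset_inter_left _ (hPQ j)

theorem TOpApprox_sandwich_general {n m n₁ n₂ : ℕ}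
    (𝒳 : Set (Fin n → ℝ)) (𝒰 : Set (Fin m → ℝ))
    (f : (Fin n → ℝ) → (Fin m → ℝ) → Fin n → ℝ)
    (ρ ε μ : ℝ)
    (Phat : Set (Fin n → ℝ) → Set (Fin n → ℝ))
    (hPhat : ∀ Y : Set (Fin n → ℝ), IsCompact Y →
      Pre 𝒳 𝒰 f 0 (pdiff Y (ballInf (ρ * (ε + μ)))) ⊆ Phat Y ∧
      Phat Y ⊆ Pre 𝒳 𝒰 f 0 Y)
    (M : Fin n₁ → Fin n₂ → Set (Fin n → ℝ))
    (W : Fin n₂ → Set (Fin n → ℝ)) (hW : ∀ j, IsCompact (W j)) :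
    ∀ i, TOp 𝒳 𝒰 f (ρ * (ε + μ)) M W i ⊆ TOpApprox Phat M W i ∧
      TOpApprox Phat M W i ⊆ TOp 𝒳 𝒰 f 0 M W i := by
  intro i
  rw [TOp_eq_TOpApprox_Pre, TOp_eq_TOpApprox_Pre]
  exact ⟨TOpApprox_mono M W (fun j =>
      (Pre_subset_Pre_zero_pdiff 𝒳 𝒰 f _ (W j)).trans (hPhat (W j) (hW j)).1) i,
    TOpApprox_mono M W (fun j => (hPhat (W j) (hW j)).2) i⟩

/-- If `f` is ρ-Lipschitz and `P̂` is sandwiched as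
`Pre(Y ⊖ B_{ρ(ε+μ)}) ⊆ P̂(Y) ⊆ Pre(Y)` for all compact `Y`, then
`T^{ρ(ε+μ)}(M,W)[i] ⊆ T̂(M,W)[i] ⊆ T⁰(M,W)[i]` for all `i`. -/
theorem TOpApprox_sandwich {n m n₁ n₂ : ℕ}
    (𝒳 : Set (Fin n → ℝ)) (𝒰 : Set (Fin m → ℝ))
    (h𝒳 : IsCompact 𝒳) (h𝒰 : IsCompact 𝒰)
    (f : (Fin n → ℝ) → (Fin m → ℝ) → Fin n → ℝ)
    (ρ ε μ : ℝ) (hρ : 0 < ρ) (hε : 0 < ε) (hμ : 0 < μ)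
    (hLip : ∀ x ∈ 𝒳, ∀ y ∈ 𝒳, ∀ u ∈ 𝒰, ∀ v ∈ 𝒰,
      ‖f x u - f y v‖ ≤ ρ * (‖x - y‖ + ‖u - v‖))
    (Phat : Set (Fin n → ℝ) → Set (Fin n → ℝ))
    (hPhat : ∀ Y : Set (Fin n → ℝ), IsCompact Y →
      Pre 𝒳 𝒰 f 0 (pdiff Y (ballInf (ρ * (ε + μ)))) ⊆ Phat Y ∧
      Phat Y ⊆ Pre 𝒳 𝒰 f 0 Y)
    (M : Fin n₁ → Fin n₂ → Set (Fin n → ℝ))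
    (W : Fin n₂ → Set (Fin n → ℝ)) (hW : ∀ j, IsCompact (W j)) :
    ∀ i, TOp 𝒳 𝒰 f (ρ * (ε + μ)) M W i ⊆ TOpApprox Phat M W i ∧
      TOpApprox Phat M W i ⊆ TOp 𝒳 𝒰 f 0 M W i :=
  TOpApprox_sandwich_general 𝒳 𝒰 f ρ ε μ Phat hPhat M W hW
end

section
/- Under-sampled predecessor inclusion: assume f is ρ-Lipschitz as above, and the sampled control set 𝒰_μ ⊆ 𝒰 is a μ-net of 𝒰 (every u ∈ 𝒰 is within μ in ∞-norm of some u' ∈ 𝒰_μ). Then for compact Y ⊆ 𝒳, Pre_{𝒰}(Y ⊖ B_{ρμ}) ⊆ Pre_{𝒰_μ}(Y), where Pre_S(X) = {x ∈ 𝒳 | ∃u ∈ S, f(x,u) ∈ X}. -/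
open Set

/-- Predecessor with control set `S`: `Pre_S(X) = {x ∈ 𝒳 | ∃ u ∈ S, f x u ∈ X}`. -/
def PreS {n m : ℕ} (𝒳 : Set (Fin n → ℝ)) (S : Set (Fin m → ℝ))
    (f : (Fin n → ℝ) → (Fin m → ℝ) → Fin n → ℝ)
    (X : Set (Fin n → ℝ)) : Set (Fin n → ℝ) :=
  {x | x ∈ 𝒳 ∧ ∃ u ∈ S, f x u ∈ X}

theorem norm_sub_le_mul_norm_sub_right {E F G : Type*} [SeminormedAddCommGroup E]
    [SeminormedAddCommGroup F] [SeminormedAddCommGroup G] {f : E → F → G} {ρ : ℝ}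
    (hLip : ∀ x y u v, ‖f x u - f y v‖ ≤ ρ * (‖x - y‖ + ‖u - v‖)) (x : E) (u v : F) :
    ‖f x u - f x v‖ ≤ ρ * ‖u - v‖ := by
  simpa using hLip x x u v

theorem mem_of_mem_pdiff_ballInf {n : ℕ} {A : Set (Fin n → ℝ)} {r : ℝ} {c y : Fin n → ℝ}
    (hc : c ∈ pdiff A (ballInf r)) (hy : ‖y - c‖ ≤ r) : y ∈ A := by
  simpa using hc (y - c) hy

theorem undersampled_pre_subset_general {n m : ℕ}
    (𝒳 : Set (Fin n → ℝ)) (𝒰 𝒰μ : Set (Fin m → ℝ))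
    (f : (Fin n → ℝ) → (Fin m → ℝ) → Fin n → ℝ)
    (ρ μ : ℝ) (hρ : 0 < ρ)
    (hLip : ∀ (x y : Fin n → ℝ) (u v : Fin m → ℝ),
      ‖f x u - f y v‖ ≤ ρ * (‖x - y‖ + ‖u - v‖))
    (hnet : ∀ u ∈ 𝒰, ∃ u' ∈ 𝒰μ, ‖u - u'‖ ≤ μ)
    (Y : Set (Fin n → ℝ)) :
    PreS 𝒳 𝒰 f (pdiff Y (ballInf (ρ * μ))) ⊆ PreS 𝒳 𝒰μ f Y := by
  rintro x ⟨hx, u, hu, hfu⟩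
  obtain ⟨u', hu', hdist⟩ := hnet u hu
  refine ⟨hx, u', hu', mem_of_mem_pdiff_ballInf hfu ?_⟩
  calc ‖f x u' - f x u‖ ≤ ρ * ‖u' - u‖ := norm_sub_le_mul_norm_sub_right hLip x u' u
    _ ≤ ρ * μ := by
      rw [norm_sub_rev]
      exact mul_le_mul_of_nonneg_left hdist hρ.le

/-- Under-sampled predecessor inclusion: if `f` is ρ-Lipschitz and `𝒰_μ ⊆ 𝒰` is a
μ-net of `𝒰`, then for compact `Y ⊆ 𝒳`, `Pre_𝒰(Y ⊖ B_{ρμ}) ⊆ Pre_{𝒰_μ}(Y)`. -/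
theorem undersampled_pre_subset {n m : ℕ}
    (𝒳 : Set (Fin n → ℝ)) (𝒰 𝒰μ : Set (Fin m → ℝ))
    (h𝒳 : IsCompact 𝒳) (h𝒰 : IsCompact 𝒰)
    (f : (Fin n → ℝ) → (Fin m → ℝ) → Fin n → ℝ)
    (ρ μ : ℝ) (hρ : 0 < ρ) (hμ : 0 < μ)
    (hLip : ∀ (x y : Fin n → ℝ) (u v : Fin m → ℝ),
      ‖f x u - f y v‖ ≤ ρ * (‖x - y‖ + ‖u - v‖))
    (hsub : 𝒰μ ⊆ 𝒰)
    (hnet : ∀ u ∈ 𝒰, ∃ u' ∈ 𝒰μ, ‖u - u'‖ ≤ μ)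
    (Y : Set (Fin n → ℝ)) (hY : IsCompact Y) (hY𝒳 : Y ⊆ 𝒳) :
    PreS 𝒳 𝒰 f (pdiff Y (ballInf (ρ * μ))) ⊆ PreS 𝒳 𝒰μ f Y :=
  undersampled_pre_subset_general 𝒳 𝒰 𝒰μ f ρ μ hρ hLip hnet Y
end
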